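/- Fix p' ∈ (1, ∞), c > 0, and let E = {(x, y) ∈ [0,1]² : y > c x^{p'}} (assume c ≤ 1 so that the relevant level sets are contained in [0,1]). Define τ(t) = λ₁({x ∈ [0,1] : (x, t) ∈ E}) for t ∈ [0,1] (the length of the horizontal t-section of E). Then τ(t) = min((t/c)^{1/p'}, 1) and τ ∈ W^{1,s}([0,1]) for all s < p'/（p'−1), i.e., for all s < p where 1/p + 1/p' = 1. -/
import Mathlib


open Set MeasureTheory

theorem stmt9 (p' c : ℝ) (hp' : 1 < p') (hc : 0 < c) (hc1 : c ≤ 1)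
    (τ : ℝ → ℝ)
    (hτ : ∀ t, τ t = (volume {x ∈ Set.Icc (0:ℝ) 1 | c * x ^ p' < t}).toReal) :
    (∀ t ∈ Set.Icc (0:ℝ) 1, τ t = min ((t / c) ^ (1 / p')) 1) ∧
    (∀ s p : ℝ, 0 < s → 1 / p + 1 / p' = 1 → s < p →
      ∃ g : ℝ → ℝ, (∀ t ∈ Set.Icc (0:ℝ) 1, τ t = τ 0 + ∫ u in (0:ℝ)..t, g u) ∧
        IntervalIntegrable (fun u => |g u| ^ s) volume 0 1) := by
  have hp'0 : (0:ℝ) < p' := lt_trans one_pos hp'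
  have hα0 : (0:ℝ) < 1 / p' := by positivity
  have hα1 : 1 / p' < 1 := (div_lt_one hp'0).mpr hp'
  have hcα : (0:ℝ) < c ^ (1 / p') := Real.rpow_pos_of_pos hc _
  -- Part 1
  have part1 : ∀ t ∈ Set.Icc (0:ℝ) 1, τ t = min ((t / c) ^ (1 / p')) 1 := by
    intro t ht
    rw [hτ]
    rcases eq_or_lt_of_le ht.1 with h0 | h0
    · have hset : {x ∈ Set.Icc (0:ℝ) 1 | c * x ^ p' < t} = ∅ := by
        ext x
        simp only [mem_setOf_eq, mem_empty_iff_false, iff_false, not_and]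
        intro hx
        rw [← h0]
        exact not_lt.2 (mul_nonneg hc.le (Real.rpow_nonneg hx.1 _))
      rw [hset, ← h0, zero_div, Real.zero_rpow hα0.ne']
      simp
    · set a := (t / c) ^ (1 / p') with ha
      have ha0 : 0 < a := Real.rpow_pos_of_pos (div_pos h0 hc) _
      have hset : {x ∈ Set.Icc (0:ℝ) 1 | c * x ^ p' < t} = Set.Icc 0 1 ∩ Set.Iio a := by
        ext x
        simp only [mem_setOf_eq, mem_inter_iff, mem_Iio, and_congr_right_iff]
        intro hx
        rw [mul_comm, ← lt_div_iff₀ hc, ha, one_div]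
        exact (Real.lt_rpow_inv_iff_of_pos hx.1 (div_nonneg h0.le hc.le) hp'0).symm
      rw [hset]
      rcases le_or_gt a 1 with h1 | h1
      · have heq : Set.Icc (0:ℝ) 1 ∩ Set.Iio a = Set.Ico 0 a := by
          ext x
          simp only [mem_inter_iff, mem_Icc, mem_Iio, mem_Ico]
          exact ⟨fun h => ⟨h.1.1, h.2⟩, fun h => ⟨⟨h.1, le_trans h.2.le h1⟩, h.2⟩⟩
        rw [heq, Real.volume_Ico, sub_zero, ENNReal.toReal_ofReal ha0.le, min_eq_left h1]
      · have heq : Set.Icc (0:ℝ) 1 ∩ Set.Iio a = Set.Icc 0 1 :=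
          Set.inter_eq_left.mpr (fun x hx => lt_of_le_of_lt hx.2 h1)
        rw [heq, Real.volume_Icc, sub_zero, ENNReal.toReal_ofReal one_pos.le,
          min_eq_right h1.le]
  refine ⟨part1, ?_⟩
  intro s p hs hpp hsp
  have hτ0 : τ 0 = 0 := by
    rw [part1 0 ⟨le_refl 0, zero_le_one⟩, zero_div, Real.zero_rpow hα0.ne']
    simp
  set C : ℝ := (1 / p') / c ^ (1 / p') with hCdef
  have hC : 0 < C := div_pos hα0 hcα
  set f : ℝ → ℝ := fun u => C * u ^ (1 / p' - 1) with hfdef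
  set g : ℝ → ℝ := fun u => (Set.Ioo (0:ℝ) c).indicator f u with hgdef
  have hr : (-1:ℝ) < 1 / p' - 1 := by linarith
  -- the basic integral computation for 0 ≤ t ≤ c
  have hint : ∀ t : ℝ, 0 ≤ t → t ≤ c →
      (∫ u in (0:ℝ)..t, g u) = t ^ (1 / p') / c ^ (1 / p') := by
    intro t ht0 htc
    have hcongr : (∫ u in (0:ℝ)..t, g u) = ∫ u in (0:ℝ)..t, f u := by
      apply intervalIntegral.integral_congr_ae
      filter_upwards [compl_mem_ae_iff.2 (Real.volume_singleton (a := c))] with x hx hxI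
      rw [Set.uIoc_of_le ht0] at hxI
      have hxc : x < c :=
        lt_of_le_of_ne (le_trans hxI.2 htc) (by simpa using hx)
      simp only [hgdef]
      exact Set.indicator_of_mem (Set.mem_Ioo.mpr ⟨hxI.1, hxc⟩) f
    rw [hcongr, hfdef]
    simp only
    rw [intervalIntegral.integral_const_mul, integral_rpow (Or.inl hr)]
    rw [sub_add_cancel, Real.zero_rpow hα0.ne', sub_zero, hCdef]
    field_simp
  have hgInt01 : IntervalIntegrable g volume 0 1 := by
    have hfInt : IntervalIntegrable f volume 0 1 :=
      (intervalIntegral.intervalIntegrable_rpow' hr).const_mul C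
    rw [intervalIntegrable_iff_integrableOn_Ioc_of_le zero_le_one] at hfInt ⊢
    exact hfInt.indicator measurableSet_Ioo
  have hI : ∀ t ∈ Set.Icc (0:ℝ) 1, (∫ u in (0:ℝ)..t, g u) = min ((t / c) ^ (1 / p')) 1 := by
    intro t ht
    rcases le_or_gt t c with h | h
    · rw [hint t ht.1 h,
        min_eq_left (Real.rpow_le_one (div_nonneg ht.1 hc.le) ((div_le_one hc).mpr h) hα0.le),
        Real.div_rpow ht.1 hc.le]
    · have hsub1 : IntervalIntegrable g volume 0 c := by
        apply hgInt01.mono_set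
        rw [Set.uIcc_of_le hc.le, Set.uIcc_of_le zero_le_one]
        exact Set.Icc_subset_Icc le_rfl hc1
      have hsub2 : IntervalIntegrable g volume c t := by
        apply hgInt01.mono_set
        rw [Set.uIcc_of_le h.le, Set.uIcc_of_le zero_le_one]
        exact Set.Icc_subset_Icc hc.le ht.2
      rw [← intervalIntegral.integral_add_adjacent_intervals hsub1 hsub2]
      have h1 : (∫ u in (0:ℝ)..c, g u) = 1 := by
        rw [hint c hc.le le_rfl, div_self hcα.ne']
      have h2 : (∫ u in c..t, g u) = 0 := by
        rw [intervalIntegral.integral_congr (g := fun _ => (0:ℝ)) ?_]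
        · simp
        · intro x hx
          rw [Set.uIcc_of_le h.le] at hx
          simp only [hgdef]
          exact Set.indicator_of_notMem (fun hmem => absurd hmem.2 (not_lt.2 hx.1)) f
      rw [h1, h2,
        min_eq_right (Real.one_le_rpow ((one_le_div hc).mpr h.le) hα0.le)]
      norm_num
  refine ⟨g, fun t ht => by rw [part1 t ht, hτ0, hI t ht, zero_add], ?_⟩
  -- integrability of |g|^s
  have hp0 : 0 < p := by
    have h1p : 0 < 1 / p := by linarith
    exact (one_div_pos).mp h1p
  have hr2 : (-1:ℝ) < (1 / p' - 1) * s := by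
    have h1 : 1 / p' - 1 = -(1 / p) := by linarith
    rw [h1]
    have : s / p < 1 := (div_lt_one hp0).mpr hsp
    calc (-1:ℝ) < -(s/p) := by linarith
    _ = -(1/p) * s := by ring
  have hInt2 : IntervalIntegrable (fun u => |f u| ^ s) volume 0 1 := by
    have base : IntervalIntegrable (fun u => C ^ s * u ^ ((1 / p' - 1) * s)) volume 0 1 :=
      (intervalIntegral.intervalIntegrable_rpow' hr2).const_mul _
    rw [intervalIntegrable_iff_integrableOn_Ioc_of_le zero_le_one] at base ⊢
    refine base.congr_fun ?_ measurableSet_Ioc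
    intro u hu
    have hu0 : 0 < u := hu.1
    have hupos : 0 < u ^ (1 / p' - 1) := Real.rpow_pos_of_pos hu0 _
    rw [hfdef]
    simp only
    rw [abs_of_pos (mul_pos hC hupos), Real.mul_rpow hC.le hupos.le,
      ← Real.rpow_mul hu0.le]
  have hgs : (fun u => |g u| ^ s) = (Set.Ioo (0:ℝ) c).indicator (fun u => |f u| ^ s) := by
    funext u
    by_cases hu : u ∈ Set.Ioo (0:ℝ) c
    · rw [Set.indicator_of_mem hu, hgdef]
      simp only
      rw [Set.indicator_of_mem hu]
    · rw [Set.indicator_of_notMem hu, hgdef]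
      simp only
      rw [Set.indicator_of_notMem hu, abs_zero, Real.zero_rpow hs.ne']
  rw [hgs]
  rw [intervalIntegrable_iff_integrableOn_Ioc_of_le zero_le_one] at hInt2 ⊢
  exact hInt2.indicator measurableSet_Ioo
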